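/- arXiv:math/0612132 — 3 statements merged into one kernel-verified Lean document; each statement's English description precedes it below -/
import Mathlib

section
/- Any arrangement of k ≥ 1 hyperplanes through the origin in ℝⁿ (n ≥ 1) separates ℝⁿ into at most 2·∑_{i=0}^{n-1} C(k-1, i) connected regions; in particular, the number of connected components of the complement of the union of the hyperplanes is at most O(k^{n-1}) for fixed n. -/
open Finset

/-- Realizability of a sign pattern. -/
def Rz {k : ℕ} {V : Type} [AddCommGroup V] [Module ℝ V]
    (φ : Fin k → V →ₗ[ℝ] ℝ) (s : Fin k → Bool) : Prop :=
  ∃ x : V, ∀ i, 0 < (if s i then (1:ℝ) else -1) * φ i x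

lemma pascal_sum (k m : ℕ) :
    ∑ i ∈ range (m+1), Nat.choose (k+1) i
      = ∑ i ∈ range (m+1), Nat.choose k i + ∑ i ∈ range m, Nat.choose k i := by
  induction m with
  | zero => simp
  | succ m ih =>
      rw [Finset.sum_range_succ, ih, Nat.choose_succ_succ,
        Finset.sum_range_succ (f := fun i => Nat.choose k i) (n := m+1),
        Finset.sum_range_succ (f := fun i => Nat.choose k i) (n := m)]
      ring

lemma seg {V : Type} [AddCommGroup V] [Module ℝ V] (H : V →ₗ[ℝ] ℝ) {k : ℕ}
    (g : Fin k → V →ₗ[ℝ] ℝ) (c : Fin k → ℝ) (x y : V) (hx : 0 < H x) (hy : H y < 0)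
    (h1 : ∀ i, 0 < c i * g i x) (h2 : ∀ i, 0 < c i * g i y) :
    ∃ z : V, H z = 0 ∧ ∀ i, 0 < c i * g i z := by
  refine ⟨(-H y) • x + (H x) • y, ?_, fun i => ?_⟩
  · simp only [map_add, map_smul, smul_eq_mul]; ring
  · have e : g i ((-H y) • x + (H x) • y) = (-H y) * g i x + (H x) * g i y := by
      simp only [map_add, map_smul, smul_eq_mul]
    rw [e]
    nlinarith [mul_pos (neg_pos.mpr hy) (h1 i), mul_pos hx (h2 i)]

lemma key : ∀ k : ℕ, 1 ≤ k → ∀ (V : Type) (_iA : AddCommGroup V) (_iM : Module ℝ V)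
    (_iF : FiniteDimensional ℝ V) (φ : Fin k → V →ₗ[ℝ] ℝ), (∀ i, φ i ≠ 0) →
    Nat.card {s : Fin k → Bool // Rz φ s}
      ≤ 2 * ∑ i ∈ range (Module.finrank ℝ V), Nat.choose (k-1) i := by
  intro k hk
  induction k, hk using Nat.le_induction with
  | base =>
      intro V iA iM iF φ hφ
      have hn : 1 ≤ Module.finrank ℝ V := by
        obtain ⟨x, hx⟩ := DFunLike.ne_iff.mp (hφ 0)
        have : x ≠ 0 := fun h => hx (by simp [h])
        have : Nontrivial V := ⟨x, 0, this⟩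
        exact Module.finrank_pos
      have h2 : Nat.card {s : Fin 1 → Bool // Rz φ s} ≤ 2 := by
        have := Nat.card_le_card_of_injective
          (Subtype.val : {s : Fin 1 → Bool // Rz φ s} → (Fin 1 → Bool)) Subtype.val_injective
        simpa [Nat.card_eq_fintype_card] using this
      refine h2.trans ?_
      have : (1:ℕ) ≤ ∑ i ∈ range (Module.finrank ℝ V), Nat.choose (1-1) i := by
        calc (1:ℕ) = ∑ i ∈ range 1, Nat.choose (1-1) i := by simp
        _ ≤ _ := Finset.sum_le_sum_of_subset (by
              intro a ha; simp only [Finset.mem_range] at *; omega)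
      omega
  | succ k hk ih =>
      intro V iA iM iF φ hφ
      set H := φ (Fin.last k) with hH
      set W := LinearMap.ker H with hWdef
      set ψ : Fin k → V →ₗ[ℝ] ℝ := fun i => φ i.castSucc with hψdef
      set ψ' : Fin k → W →ₗ[ℝ] ℝ := fun i => (ψ i).comp W.subtype with hψ'def
      have hn : 1 ≤ Module.finrank ℝ V := by
        obtain ⟨x, hx⟩ := DFunLike.ne_iff.mp (hφ (Fin.last k))
        have hx0 : x ≠ 0 := fun h => hx (by simp [h])
        have : Nontrivial V := ⟨x, 0, hx0⟩
        exact Module.finrank_pos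
      have hdim : Module.finrank ℝ W = Module.finrank ℝ V - 1 := by
        have hs : Function.Surjective H := by
          obtain ⟨x, hx⟩ := DFunLike.ne_iff.mp (hφ (Fin.last k))
          have hx' : H x ≠ 0 := by simpa using hx
          intro r
          refine ⟨(r / H x) • x, ?_⟩
          simp only [map_smul, smul_eq_mul]
          field_simp
        have h1 : Module.finrank ℝ (LinearMap.range H) = 1 := by
          rw [LinearMap.range_eq_top.mpr hs]
          simpa using Module.finrank_self ℝ
        have h2 := H.finrank_range_add_finrank_ker
        have h3 : Module.finrank ℝ W = Module.finrank ℝ (LinearMap.ker H) := rfl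
        omega
      -- deletion
      set D : (Fin (k+1) → Bool) → (Fin k → Bool) := fun s i => s i.castSucc with hDdef
      have hD : ∀ s, Rz φ s → Rz ψ (D s) := by
        rintro s ⟨x, hx⟩
        exact ⟨x, fun i => hx i.castSucc⟩
      -- midpoint lemma
      have hmid : ∀ s t : Fin (k+1) → Bool, Rz φ s → Rz φ t → D s = D t →
          s (Fin.last k) ≠ t (Fin.last k) →
          ∃ z : V, H z = 0 ∧ ∀ i : Fin k,
            0 < (if s i.castSucc then (1:ℝ) else -1) * ψ i z := by
        rintro s t ⟨x, hx⟩ ⟨y, hy⟩ hst hne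
        have hst' : ∀ i : Fin k, t i.castSucc = s i.castSucc := by
          intro i; exact (congrFun hst i).symm
        cases hb : s (Fin.last k)
        · -- s last = false, t last = true : H x < 0 < H y
          have ht : t (Fin.last k) = true := by
            rw [hb] at hne
            exact eq_true_of_ne_false (Ne.symm hne)
          have hHx : H x < 0 := by
            have := hx (Fin.last k); rw [hb] at this; simp at this; linarith
          have hHy : 0 < H y := by
            have := hy (Fin.last k); rw [ht] at this; simpa using this
          obtain ⟨z, hz1, hz2⟩ := seg H ψ (fun i => if s i.castSucc then (1:ℝ) else -1) y x
            hHy hHx (fun i => by have := hy i.castSucc; rw [hst' i] at this; exact this)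
            (fun i => hx i.castSucc)
          exact ⟨z, hz1, hz2⟩
        · -- s last = true, t last = false
          have ht : t (Fin.last k) = false := by
            rw [hb] at hne
            exact eq_false_of_ne_true (Ne.symm hne)
          have hHx : 0 < H x := by
            have := hx (Fin.last k); rw [hb] at this; simpa using this
          have hHy : H y < 0 := by
            have := hy (Fin.last k); rw [ht] at this; simp at this; linarith
          obtain ⟨z, hz1, hz2⟩ := seg H ψ (fun i => if s i.castSucc then (1:ℝ) else -1) x y
            hHx hHy (fun i => hx i.castSucc)
            (fun i => by have := hy i.castSucc; rw [hst' i] at this; exact this)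
          exact ⟨z, hz1, hz2⟩
      have hφψ : ∀ i : Fin k, ψ i ≠ 0 := fun i => hφ i.castSucc
      by_cases hψ0 : ∀ i : Fin k, ψ' i ≠ 0
      · -- case B : all restrictions nonzero
        -- injection into sum
        have hsplitC : ∀ s : Fin (k+1) → Bool, Rz φ s → s (Fin.last k) = true →
            Rz φ (Function.update s (Fin.last k) false) → Rz ψ' (D s) := by
          intro s hs hlast hs'
          have hDeq : D s = D (Function.update s (Fin.last k) false) := by
            funext i
            simp only [hDdef, Function.update_of_ne (Fin.castSucc_lt_last i).ne]
          have hneq : s (Fin.last k) ≠ (Function.update s (Fin.last k) false) (Fin.last k) := by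
            rw [Function.update_self, hlast]; simp
          obtain ⟨z, hz1, hz2⟩ := hmid s _ hs hs' hDeq hneq
          refine ⟨⟨z, LinearMap.mem_ker.mpr hz1⟩, fun i => ?_⟩
          exact hz2 i
        classical
        set J : {s : Fin (k+1) → Bool // Rz φ s} →
            {s : Fin k → Bool // Rz ψ s} ⊕ {s : Fin k → Bool // Rz ψ' s} :=
          fun p => if h : p.1 (Fin.last k) = true ∧
              Rz φ (Function.update p.1 (Fin.last k) false)
            then Sum.inr ⟨D p.1, hsplitC p.1 p.2 h.1 h.2⟩
            else Sum.inl ⟨D p.1, hD p.1 p.2⟩ with hJdef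
        have hJinj : Function.Injective J := by
          rintro ⟨s, hs⟩ ⟨t, ht⟩ heq
          have hext : D s = D t → s (Fin.last k) = t (Fin.last k) → s = t := by
            intro h1 h2
            funext j
            refine Fin.lastCases ?_ ?_ j
            · exact h2
            · intro i; exact congrFun h1 i
          simp only [hJdef] at heq
          by_cases hPs : s (Fin.last k) = true ∧ Rz φ (Function.update s (Fin.last k) false) <;>
            by_cases hPt : t (Fin.last k) = true ∧ Rz φ (Function.update t (Fin.last k) false)
          · -- both inr
            rw [dif_pos hPs, dif_pos hPt] at heq
            simp only [Sum.inr.injEq, Subtype.mk.injEq] at heq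
            exact Subtype.ext (hext heq (hPs.1.trans hPt.1.symm))
          · rw [dif_pos hPs, dif_neg hPt] at heq
            exact absurd heq (by simp)
          · rw [dif_neg hPs, dif_pos hPt] at heq
            exact absurd heq (by simp)
          · -- both inl
            rw [dif_neg hPs, dif_neg hPt] at heq
            simp only [Sum.inl.injEq, Subtype.mk.injEq] at heq
            refine Subtype.ext (hext heq ?_)
            by_contra hne
            -- one is true, the other false
            cases hbs : s (Fin.last k)
            · have hbt : t (Fin.last k) = true := by
                rw [hbs] at hne
                exact eq_true_of_ne_false (Ne.symm hne)
              apply hPt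
              refine ⟨hbt, ?_⟩
              have : Function.update t (Fin.last k) false = s := by
                funext j
                refine Fin.lastCases ?_ ?_ j
                · rw [Function.update_self, hbs]
                · intro i
                  rw [Function.update_of_ne (Fin.castSucc_lt_last i).ne]
                  exact (congrFun heq i).symm
              rw [this]; exact hs
            · apply hPs
              refine ⟨hbs, ?_⟩
              have hbt : t (Fin.last k) = false := by
                rw [hbs] at hne
                exact eq_false_of_ne_true (Ne.symm hne)
              have : Function.update s (Fin.last k) false = t := by
                funext j
                refine Fin.lastCases ?_ ?_ j
                · rw [Function.update_self, hbt]
                · intro i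
                  rw [Function.update_of_ne (Fin.castSucc_lt_last i).ne]
                  exact congrFun heq i
              rw [this]; exact ht
        have hcard := Nat.card_le_card_of_injective J hJinj
        rw [Nat.card_sum] at hcard
        have hB := ih V iA iM iF ψ hφψ
        have hC := ih W inferInstance inferInstance inferInstance ψ' hψ0
        rw [hdim] at hC
        obtain ⟨j, rfl⟩ : ∃ j, k = j + 1 := ⟨k - 1, by omega⟩
        obtain ⟨m, hm⟩ : ∃ m, Module.finrank ℝ V = m + 1 := ⟨Module.finrank ℝ V - 1, by omega⟩
        rw [hm] at hB hC ⊢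
        simp only [Nat.add_sub_cancel] at hB hC ⊢
        rw [pascal_sum j m]
        omega
      · -- case A : some restriction is zero, deletion is injective
        push_neg at hψ0
        obtain ⟨i0, hi0⟩ := hψ0
        set J : {s : Fin (k+1) → Bool // Rz φ s} → {s : Fin k → Bool // Rz ψ s} :=
          fun p => ⟨D p.1, hD p.1 p.2⟩ with hJdef
        have hJinj : Function.Injective J := by
          rintro ⟨s, hs⟩ ⟨t, ht⟩ heq
          simp only [hJdef, Subtype.mk.injEq] at heq
          refine Subtype.ext ?_
          funext j
          refine Fin.lastCases ?_ (fun i => congrFun heq i) j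
          by_contra hne
          obtain ⟨z, hz1, hz2⟩ := hmid s t hs ht heq hne
          have hzW : z ∈ W := LinearMap.mem_ker.mpr hz1
          have : ψ' i0 ⟨z, hzW⟩ = 0 := by rw [hi0]; rfl
          have hzψ : ψ i0 z = 0 := this
          have := hz2 i0
          rw [hzψ, mul_zero] at this
          exact lt_irrefl 0 this
        have hcard := Nat.card_le_card_of_injective J hJinj
        refine hcard.trans ((ih V iA iM iF ψ hφψ).trans ?_)
        have : ∀ i, Nat.choose (k - 1) i ≤ Nat.choose (k + 1 - 1) i := by
          intro i; exact Nat.choose_le_choose i (by omega)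
        exact Nat.mul_le_mul_left 2 (Finset.sum_le_sum fun i _ => this i)

/-- k ≥ 1 hyperplanes through the origin in ℝⁿ (n ≥ 1) separate ℝⁿ into
at most 2·∑_{i=0}^{n-1} C(k-1, i) connected regions. -/
theorem stmt1 (n k : ℕ) (hn : 1 ≤ n) (hk : 1 ≤ k)
    (φ : Fin k → (EuclideanSpace ℝ (Fin n) →ₗ[ℝ] ℝ)) (hφ : ∀ i, φ i ≠ 0) :
    Nat.card (ConnectedComponents {x : EuclideanSpace ℝ (Fin n) // ∀ i, φ i x ≠ 0}) ≤
      2 * ∑ i ∈ Finset.range n, Nat.choose (k - 1) i := by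
  classical
  set E := EuclideanSpace ℝ (Fin n)
  set X := {x : E // ∀ i, φ i x ≠ 0} with hXdef
  set F : X → (Fin k → Bool) := fun x i => decide (0 < φ i x.val) with hFdef
  have hcont : ∀ i, Continuous fun v : E => φ i v := fun i =>
    (φ i).continuous_of_finiteDimensional
  -- each point realizes its own sign pattern
  have hrel : ∀ w : X, ∀ i, 0 < (if F w i then (1:ℝ) else -1) * φ i w.val := by
    intro w i
    by_cases h0 : 0 < φ i w.val
    · simp [hFdef, h0]
    · have hlt : φ i w.val < 0 := lt_of_le_of_ne (not_lt.mp h0) (w.2 i)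
      simp only [hFdef, h0, decide_false, if_neg Bool.false_ne_true]
      linarith
  -- sign map is constant on connected components
  have hconst : ∀ x y : X, (ConnectedComponents.mk x = ConnectedComponents.mk y) → F x = F y := by
    intro x y h
    rw [ConnectedComponents.coe_eq_coe] at h
    funext i
    have hyC : y ∈ connectedComponent x := h ▸ mem_connectedComponent
    have hxC : x ∈ connectedComponent x := mem_connectedComponent
    have hC : IsPreconnected ((fun w : X => φ i w.val) '' connectedComponent x) :=
      isPreconnected_connectedComponent.image _
        (((hcont i).comp continuous_subtype_val).continuousOn)
    have h0 : (0:ℝ) ∉ (fun w : X => φ i w.val) '' connectedComponent x := by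
      rintro ⟨w, -, hw⟩
      exact w.2 i hw
    have hkey : ∀ u v : X, u ∈ connectedComponent x → v ∈ connectedComponent x →
        0 < φ i u.val → φ i v.val < 0 → False := by
      intro u v hu hv hu0 hv0
      exact h0 (hC.Icc_subset ⟨v, hv, rfl⟩ ⟨u, hu, rfl⟩ ⟨le_of_lt hv0, le_of_lt hu0⟩)
    simp only [hFdef]
    apply decide_eq_decide.mpr
    constructor
    · intro hx0
      by_contra hy0
      exact hkey x y hxC hyC hx0 (lt_of_le_of_ne (not_lt.mp hy0) (y.2 i))
    · intro hy0
      by_contra hx0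
      exact hkey y x hyC hxC hy0 (lt_of_le_of_ne (not_lt.mp hx0) (x.2 i))
  -- equal sign patterns implies same component
  have hsep : ∀ x y : X, F x = F y → (ConnectedComponents.mk x = ConnectedComponents.mk y) := by
    intro x y h
    set S : Set E := {v | ∀ i, 0 < (if F x i then (1:ℝ) else -1) * φ i v} with hSdef
    have hSconv : Convex ℝ S := by
      have : S = ⋂ i, {v : E | 0 < (if F x i then (1:ℝ) else -1) * φ i v} := by
        ext v; simp [hSdef]
      rw [this]
      refine convex_iInter fun i => ?_
      exact convex_halfSpace_gt
        ⟨fun a b => by simp only [map_add]; ring, fun c a => by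
          simp only [map_smul, smul_eq_mul]; ring⟩ 0
    have hmemS : ∀ w : X, F w = F x → w.val ∈ S := by
      intro w hw i
      have := hrel w i
      rwa [congrFun hw i] at this
    have hScarrier : ∀ v ∈ S, ∀ i, φ i v ≠ 0 := by
      intro v hv i hv0
      have := hv i
      rw [hv0, mul_zero] at this
      exact lt_irrefl 0 this
    set T : Set X := Subtype.val ⁻¹' S with hTdef
    have hT : IsPreconnected T := by
      rw [← (⟨rfl⟩ : Topology.IsInducing (Subtype.val : X → E)).isPreconnected_image]
      convert hSconv.isPreconnected using 1
      apply Set.ext; intro v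
      constructor
      · rintro ⟨w, hwT, rfl⟩; exact hwT
      · intro hv; exact ⟨⟨v, hScarrier v hv⟩, hv, rfl⟩
    have hxT : x ∈ T := hmemS x rfl
    have hyT : y ∈ T := hmemS y h.symm
    rw [ConnectedComponents.coe_eq_coe']
    exact hT.subset_connectedComponent hyT hxT
  -- build the injection into realizable sign patterns
  set G : ConnectedComponents X → {s : Fin k → Bool // Rz φ s} :=
    fun c => ⟨F (Quotient.out c), ⟨(Quotient.out c).val, hrel (Quotient.out c)⟩⟩ with hGdef
  have hGinj : Function.Injective G := by
    intro c d hcd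
    simp only [hGdef, Subtype.mk.injEq] at hcd
    have := hsep _ _ (congrArg Subtype.val hcd)
    calc c = ConnectedComponents.mk (Quotient.out c) := (Quotient.out_eq' c).symm
    _ = ConnectedComponents.mk (Quotient.out d) := this
    _ = d := Quotient.out_eq' d
  have hle := Nat.card_le_card_of_injective G hGinj
  refine hle.trans ?_
  have := key k hk E inferInstance inferInstance inferInstance φ hφ
  rwa [finrank_euclideanSpace_fin] at this
end

section
/- Let k be a number field of degree d and let A ∈ GL(m, k) be an element of finite order t. Then t ≤ 4·(m·d)^{2m}. -/
open Polynomial IntermediateField Module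

theorem aux_tot (n : ℕ) : (n ≤ 4 * n.totient ^ 2) ∧ (Odd n → n ≤ n.totient ^ 2) := by
  induction n using Nat.recOnPosPrimePosCoprime with
  | prime_pow p k hp hk =>
    have hp2 : 2 ≤ p := hp.two_le
    have htot : (p ^ k).totient = p ^ (k - 1) * (p - 1) := Nat.totient_prime_pow hp hk
    have key : 3 ≤ p → p ^ k ≤ (p ^ (k - 1) * (p - 1)) ^ 2 := by
      intro h3
      have h1 : p ≤ (p - 1) ^ 2 := by
        have h := Nat.mul_le_mul_right (p - 1) (show 2 ≤ p - 1 by omega)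
        rw [pow_two]; omega
      calc p ^ k ≤ p ^ (2 * k - 1) := Nat.pow_le_pow_right (by omega) (by omega)
        _ = p ^ (2 * (k - 1)) * p := by rw [← pow_succ]; congr 1; omega
        _ ≤ p ^ (2 * (k - 1)) * (p - 1) ^ 2 := Nat.mul_le_mul_left _ h1
        _ = (p ^ (k - 1) * (p - 1)) ^ 2 := by rw [mul_pow, ← pow_mul, mul_comm (k - 1) 2]
    have hpeven : ¬ 3 ≤ p → p = 2 := fun h => by omega
    constructor
    · rw [htot]
      by_cases h3 : 3 ≤ p
      · exact le_trans (key h3) (Nat.le_mul_of_pos_left _ (by norm_num))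
      · have h2 := hpeven h3; subst h2
        norm_num
        rw [show (4:ℕ) = 2 ^ 2 by norm_num, ← pow_mul, ← pow_add]
        exact Nat.pow_le_pow_right (by omega) (by omega)
    · intro hodd
      rw [htot]
      refine key ?_
      by_contra h3
      have h2 := hpeven h3; subst h2
      have : Even ((2:ℕ) ^ k) := even_iff_two_dvd.mpr (dvd_pow_self 2 hk.ne')
      exact (Nat.not_even_iff_odd.mpr hodd) this
  | zero => simp
  | one => simp
  | coprime a b ha hb hab iha ihb =>
    have htot : (a * b).totient = a.totient * b.totient := Nat.totient_mul hab
    have hcase : Odd a ∨ Odd b := by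
      rcases Nat.even_or_odd a with hea | hoa
      · right
        rcases Nat.even_or_odd b with heb | hob
        · exfalso
          have : (2:ℕ) ∣ Nat.gcd a b := Nat.dvd_gcd hea.two_dvd heb.two_dvd
          rw [hab] at this; omega
        · exact hob
      · left; exact hoa
    constructor
    · rcases hcase with hoa | hob
      · calc a * b ≤ a.totient ^ 2 * (4 * b.totient ^ 2) :=
              Nat.mul_le_mul (iha.2 hoa) ihb.1
          _ = 4 * (a * b).totient ^ 2 := by rw [htot]; ring
      · calc a * b ≤ (4 * a.totient ^ 2) * (b.totient ^ 2) :=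
              Nat.mul_le_mul iha.1 (ihb.2 hob)
          _ = 4 * (a * b).totient ^ 2 := by rw [htot]; ring
    · intro hodd
      rw [Nat.odd_mul] at hodd
      calc a * b ≤ a.totient ^ 2 * b.totient ^ 2 := Nat.mul_le_mul (iha.2 hodd.1) (ihb.2 hodd.2)
        _ = (a * b).totient ^ 2 := by rw [htot]; ring

/-- If k is a number field of degree d and A ∈ GL(m, k) has finite order t,
then t ≤ 4·(m·d)^{2m}. -/
theorem stmt7 (K : Type*) [Field K] [NumberField K] (d m : ℕ)
    (hd : Module.finrank ℚ K = d) (A : GL (Fin m) K) (t : ℕ) (ht : 0 < t)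
    (hord : orderOf A = t) :
    t ≤ 4 * (m * d) ^ (2 * m) := by
  have hd1 : 1 ≤ d := hd ▸ Module.finrank_pos
  rcases Nat.eq_zero_or_pos m with rfl | hm
  · have hA1 : A = 1 := Units.ext (Subsingleton.elim _ _)
    have : t = 1 := by rw [← hord, hA1, orderOf_one]
    subst this; simp
  have hm1 : 1 ≤ m := hm
  set M : Matrix (Fin m) (Fin m) K := (A : Matrix (Fin m) (Fin m) K) with hM
  have hMt : orderOf M = t := by rw [← hord]; exact orderOf_units
  set L := AlgebraicClosure K with hL
  have hcharK : CharZero K := inferInstance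
  have hcharL : CharZero L := charZero_of_injective_algebraMap (algebraMap K L).injective
  set φ : Matrix (Fin m) (Fin m) K →+* Matrix (Fin m) (Fin m) L :=
    (algebraMap K L).mapMatrix with hφdef
  have hφ : Function.Injective φ := Matrix.map_injective (algebraMap K L).injective
  set N : Matrix (Fin m) (Fin m) L := φ M with hN
  have hNt : orderOf N = t := by rw [← hMt]; exact orderOf_injective φ.toMonoidHom hφ M
  have hNpow : N ^ t = 1 := by rw [← hNt]; exact pow_orderOf_eq_one N
  -- X^t - 1 facts
  have hXt_monic : (X ^ t - 1 : L[X]).Monic := by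
    simpa using monic_X_pow_sub_C (1 : L) ht.ne'
  have haevalN : Polynomial.aeval N (X ^ t - 1 : L[X]) = 0 := by
    simp [hNpow]
  have hNint : IsIntegral L N := ⟨X ^ t - 1, hXt_monic, haevalN⟩
  set p : L[X] := minpoly L N with hp
  have hpmonic : p.Monic := minpoly.monic hNint
  have hpne : p ≠ 0 := hpmonic.ne_zero
  have hpdvd : p ∣ X ^ t - 1 := minpoly.dvd L N haevalN
  have hsep : (X ^ t - 1 : L[X]).Separable :=
    (Polynomial.X_pow_sub_one_separable_iff).mpr (by exact_mod_cast (Nat.cast_ne_zero (R := L)).mpr ht.ne')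
  have hpsep : p.Separable := hsep.of_dvd hpdvd
  -- minpoly of M over K
  have hMpow : M ^ t = 1 := by rw [← hMt]; exact pow_orderOf_eq_one M
  have haevalM : Polynomial.aeval M (X ^ t - 1 : K[X]) = 0 := by simp [hMpow]
  have hMint : IsIntegral K M := ⟨X ^ t - 1, by simpa using monic_X_pow_sub_C (1 : K) ht.ne', haevalM⟩
  set q : K[X] := minpoly K M with hq
  have hqmonic : q.Monic := minpoly.monic hMint
  have hqdeg : q.natDegree ≤ m := by
    calc q.natDegree ≤ M.charpoly.natDegree :=
          Polynomial.natDegree_le_of_dvd (Matrix.minpoly_dvd_charpoly M) (Matrix.charpoly_monic M).ne_zero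
      _ = m := by rw [Matrix.charpoly_natDegree_eq_dim]; simp
  -- p divides the map of q
  have haevalNq : Polynomial.aeval N (q.map (algebraMap K L)) = 0 := by
    rw [Polynomial.aeval_def, Polynomial.eval₂_map, hN]
    have hcomp : (algebraMap L (Matrix (Fin m) (Fin m) L)).comp (algebraMap K L)
        = φ.comp (algebraMap K (Matrix (Fin m) (Fin m) K)) := by
      ext x i j
      simp only [hφdef, RingHom.comp_apply, Matrix.algebraMap_eq_diagonal,
        RingHom.mapMatrix_apply, Matrix.diagonal_apply, Matrix.map_apply, apply_ite, map_zero]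
      split_ifs <;> simp [Pi.algebraMap_apply]
    rw [hcomp, ← Polynomial.hom_eval₂, ← Polynomial.aeval_def, minpoly.aeval, map_zero]
  have hpdvdq : p ∣ q.map (algebraMap K L) := minpoly.dvd L N haevalNq
  have hqmapne : q.map (algebraMap K L) ≠ 0 :=
    (hqmonic.map (algebraMap K L)).ne_zero
  have hpdeg : p.natDegree ≤ m := by
    calc p.natDegree ≤ (q.map (algebraMap K L)).natDegree :=
          Polynomial.natDegree_le_of_dvd hpdvdq hqmapne
      _ = q.natDegree := q.natDegree_map (algebraMap K L)
      _ ≤ m := hqdeg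
  classical
  set S : Finset L := p.roots.toFinset with hS
  have hSroot : ∀ ζ ∈ S, p.IsRoot ζ := by
    intro ζ hζ
    rw [hS, Multiset.mem_toFinset, Polynomial.mem_roots hpne] at hζ
    exact hζ
  have hSpow : ∀ ζ ∈ S, ζ ^ t = 1 := by
    intro ζ hζ
    obtain ⟨c, hc⟩ := hpdvd
    have := hSroot ζ hζ
    have h2 : Polynomial.eval ζ (X ^ t - 1 : L[X]) = 0 := by
      rw [hc, Polynomial.eval_mul, Polynomial.IsRoot.eq_zero this, zero_mul]
    simpa [sub_eq_zero] using h2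
  have hSord : ∀ ζ ∈ S, 0 < orderOf ζ ∧ orderOf ζ ∣ t := by
    intro ζ hζ
    have hfin : IsOfFinOrder ζ := isOfFinOrder_iff_pow_eq_one.mpr ⟨t, ht, hSpow ζ hζ⟩
    exact ⟨hfin.orderOf_pos, orderOf_dvd_of_pow_eq_one (hSpow ζ hζ)⟩
  set n : ℕ := S.lcm orderOf with hn
  have hndvd : n ∣ t := Finset.lcm_dvd fun ζ hζ => (hSord ζ hζ).2
  have hnne : n ≠ 0 := fun h => by rw [h] at hndvd; omega
  -- p divides X ^ n - 1
  have hXn_ne : (X ^ n - 1 : L[X]) ≠ 0 := by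
    simpa using (monic_X_pow_sub_C (1 : L) hnne).ne_zero
  have hroots_le : p.roots ≤ (X ^ n - 1 : L[X]).roots := by
    rw [Multiset.le_iff_subset (Polynomial.nodup_roots hpsep)]
    intro ζ hζ
    have hζS : ζ ∈ S := by rw [hS, Multiset.mem_toFinset]; exact hζ
    have : ζ ^ n = 1 := by
      have : orderOf ζ ∣ n := Finset.dvd_lcm hζS
      exact orderOf_dvd_iff_pow_eq_one.mp this
    rw [Polynomial.mem_roots hXn_ne]
    simp [Polynomial.IsRoot, this]
  have hpdvdn : p ∣ (X ^ n - 1 : L[X]) := by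
    have h1 : p = (p.roots.map fun a => X - C a).prod :=
      (IsAlgClosed.splits p).eq_prod_roots_of_monic hpmonic
    rw [h1]
    exact dvd_trans (Multiset.prod_dvd_prod_of_le (Multiset.map_le_map hroots_le))
      (Polynomial.prod_multiset_X_sub_C_dvd _)
  have htdvdn : t ∣ n := by
    rw [← hNt]
    apply orderOf_dvd_of_pow_eq_one
    obtain ⟨c, hc⟩ := hpdvdn
    have : Polynomial.aeval N (X ^ n - 1 : L[X]) = 0 := by
      rw [hc, map_mul, minpoly.aeval, zero_mul]
    simpa [sub_eq_zero] using this
  have htn : t = n := Nat.dvd_antisymm htdvdn hndvd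
  -- each root is integral over K of degree ≤ m
  have hζfacts : ∀ ζ ∈ S, IsIntegral K ζ ∧ (minpoly K ζ).natDegree ≤ m := by
    intro ζ hζ
    have hroot : Polynomial.aeval ζ q = 0 := by
      obtain ⟨c, hc⟩ := hpdvdq
      have h0 : Polynomial.eval ζ (q.map (algebraMap K L)) = 0 := by
        rw [hc, Polynomial.eval_mul, Polynomial.IsRoot.eq_zero (hSroot ζ hζ), zero_mul]
      rwa [Polynomial.eval_map, ← Polynomial.aeval_def] at h0
    have hint : IsIntegral K ζ := ⟨q, hqmonic, hroot⟩
    refine ⟨hint, ?_⟩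
    calc (minpoly K ζ).natDegree ≤ q.natDegree :=
          Polynomial.natDegree_le_of_dvd (minpoly.dvd K ζ hroot) hqmonic.ne_zero
      _ ≤ m := hqdeg
  have hScard : S.card ≤ m := by
    calc S.card ≤ Multiset.card p.roots := p.roots.toFinset_card_le
      _ ≤ p.natDegree := Polynomial.card_roots' p
      _ ≤ m := hpdeg
  -- finrank bound for adjoin of a finset of bounded-degree integral elements
  have hfinrank : ∀ s : Finset L, (∀ ζ ∈ s, IsIntegral K ζ ∧ (minpoly K ζ).natDegree ≤ m) →
      FiniteDimensional K (IntermediateField.adjoin K (s : Set L)) ∧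
        finrank K (IntermediateField.adjoin K (s : Set L)) ≤ m ^ s.card := by
    intro s
    induction s using Finset.induction_on with
    | empty =>
      intro _
      rw [Finset.coe_empty, IntermediateField.adjoin_empty]
      exact ⟨inferInstance, by rw [IntermediateField.finrank_bot]; simp⟩
    | @insert ζ s hζs ih =>
      intro h
      have hz := h ζ (Finset.mem_insert_self ζ s)
      obtain ⟨hfd, hfr⟩ := ih fun x hx => h x (Finset.mem_insert_of_mem hx)
      rw [Finset.coe_insert, Set.insert_eq, IntermediateField.adjoin_union]
      haveI h1 : FiniteDimensional K (IntermediateField.adjoin K ({ζ} : Set L)) :=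
        IntermediateField.adjoin.finiteDimensional hz.1
      haveI h2 := hfd
      refine ⟨IntermediateField.finiteDimensional_sup _ _, ?_⟩
      calc finrank K ↥(IntermediateField.adjoin K ({ζ} : Set L) ⊔
              IntermediateField.adjoin K (s : Set L)) ≤
            finrank K (IntermediateField.adjoin K ({ζ} : Set L)) *
              finrank K (IntermediateField.adjoin K (s : Set L)) :=
          IntermediateField.finrank_sup_le _ _
        _ ≤ m * m ^ s.card := by
            refine Nat.mul_le_mul ?_ hfr
            rw [IntermediateField.adjoin.finrank hz.1]
            exact hz.2
        _ = m ^ (insert ζ s).card := by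
            rw [Finset.card_insert_of_notMem hζs, pow_succ, mul_comm]
  -- a primitive lcm-root inside the adjoin
  have hprimroot : ∀ s : Finset L, (∀ ζ ∈ s, 0 < orderOf ζ) →
      0 < s.lcm orderOf ∧ ∃ g : L, g ∈ IntermediateField.adjoin K (s : Set L) ∧
        IsPrimitiveRoot g (s.lcm orderOf) := by
    intro s
    induction s using Finset.induction_on with
    | empty =>
      intro _
      rw [Finset.lcm_empty]
      exact ⟨one_pos, 1, one_mem _, IsPrimitiveRoot.one⟩
    | @insert ζ s hζs ih =>
      intro h
      obtain ⟨hpos, g, hgmem, hg⟩ := ih fun x hx => h x (Finset.mem_insert_of_mem hx)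
      have hζpos := h ζ (Finset.mem_insert_self ζ s)
      have hζprim : IsPrimitiveRoot ζ (orderOf ζ) := IsPrimitiveRoot.orderOf ζ
      have hcomb := hζprim.pow_mul_pow_lcm hg hζpos.ne' hpos.ne'
      rw [Finset.lcm_insert]
      have hmono : IntermediateField.adjoin K (s : Set L) ≤
          IntermediateField.adjoin K ((insert ζ s : Finset L) : Set L) :=
        IntermediateField.adjoin.mono K _ _ (by rw [Finset.coe_insert]; exact Set.subset_insert _ _)
      refine ⟨Nat.lcm_pos hζpos hpos, _, ?_, hcomb⟩
      exact mul_mem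
        (pow_mem (IntermediateField.subset_adjoin K _ (by simp)) _)
        (pow_mem (hmono hgmem) _)
  -- assemble
  obtain ⟨hfd, hfr⟩ := hfinrank S hζfacts
  obtain ⟨hnpos, g, hgmem, hgprim⟩ := hprimroot S fun ζ hζ => (hSord ζ hζ).1
  replace hgprim : IsPrimitiveRoot g t := by rw [htn, hn]; exact hgprim
  set E := IntermediateField.adjoin K ((S : Finset L) : Set L) with hE
  haveI := hfd
  set g' : E := ⟨g, hgmem⟩ with hg'
  have hg'prim : IsPrimitiveRoot g' t := by
    have halg : IsPrimitiveRoot (algebraMap E L g') t := hgprim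
    exact halg.of_map_of_injective (algebraMap E L).injective
  haveI hCE : CharZero E := charZero_of_injective_algebraMap (algebraMap K E).injective
  haveI : IsScalarTower ℚ K E := IsScalarTower.of_algebraMap_eq' (Subsingleton.elim _ _)
  haveI : FiniteDimensional ℚ E := Module.Finite.trans K E
  have h1 : Nat.totient t = (minpoly ℚ g').natDegree := by
    rw [← Polynomial.cyclotomic_eq_minpoly_rat hg'prim ht, Polynomial.natDegree_cyclotomic]
  have h2 : (minpoly ℚ g').natDegree ≤ finrank ℚ E := minpoly.natDegree_le g'
  have h3 : finrank ℚ E = d * finrank K E := by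
    rw [← hd, Module.finrank_mul_finrank ℚ K E]
  have h4 : Nat.totient t ≤ d * m ^ m := by
    rw [h1]
    refine le_trans h2 ?_
    rw [h3]
    refine Nat.mul_le_mul_left d (le_trans hfr ?_)
    exact Nat.pow_le_pow_right hm1 hScard
  calc t ≤ 4 * t.totient ^ 2 := (aux_tot t).1
    _ ≤ 4 * (d * m ^ m) ^ 2 := by
        exact Nat.mul_le_mul_left 4 (Nat.pow_le_pow_left h4 2)
    _ = 4 * (d ^ 2 * m ^ (2 * m)) := by rw [mul_pow, ← pow_mul, mul_comm m 2]
    _ ≤ 4 * (d ^ (2 * m) * m ^ (2 * m)) := by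
        exact Nat.mul_le_mul_left 4 (Nat.mul_le_mul_right _ (Nat.pow_le_pow_right hd1 (by omega)))
    _ = 4 * (m * d) ^ (2 * m) := by rw [mul_pow]; ring
end

section
/- There exists a constant c > 1 such that for every number field k ≠ ℚ, the absolute value of the discriminant of k satisfies |disc(k)| > c^{[k:ℚ]}. (Minkowski's discriminant bound: |disc(k)|^{1/2} ≥ (π/4)^{r₂}·n^n/n! where n = [k:ℚ], which gives such a c.) -/
open Real NumberField Module

/-- Minkowski-type discriminant bound: there exists c > 1 such that every
number field k ≠ ℚ satisfies |disc(k)| > c^{[k:ℚ]}. -/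
theorem stmt8 :
    ∃ c : ℝ, 1 < c ∧ ∀ (K : Type) [Field K] [NumberField K],
      1 < Module.finrank ℚ K →
        c ^ (Module.finrank ℚ K) < |(NumberField.discr K : ℝ)| := by
  refine ⟨17/10, by norm_num, fun K _ _ h => ?_⟩
  set n := Module.finrank ℚ K with hn
  have hge := NumberField.abs_discr_ge (K := K) h
  rw [← hn, Int.cast_abs] at hge
  have hint : (3 : ℝ) ≤ |(NumberField.discr K : ℝ)| := by
    have := NumberField.abs_discr_gt_two (K := K) h
    have : (3 : ℤ) ≤ |NumberField.discr K| := this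
    calc (3:ℝ) = ((3:ℤ):ℝ) := by norm_num
    _ ≤ ((|NumberField.discr K| : ℤ) : ℝ) := by exact_mod_cast this
    _ = |(NumberField.discr K : ℝ)| := by push_cast; ring
  rcases eq_or_lt_of_le (show 2 ≤ n from h) with h2 | h3
  · rw [← h2]
    norm_num
    linarith
  · -- n ≥ 3
    have hn3 : 3 ≤ n := h3
    have h1 : ((471:ℝ)/200)^n ≤ (3*π/4)^n := by
      apply pow_le_pow_left₀ (by norm_num)
      nlinarith [Real.pi_gt_d6]
    have h2 : ((471:ℝ)/340)^3 ≤ ((471:ℝ)/340)^n :=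
      pow_le_pow_right₀ (by norm_num) hn3
    have h3' : (9/4:ℝ) < ((471:ℝ)/340)^3 := by norm_num
    have hp : (0:ℝ) < (17/10)^n := by positivity
    have h4 : (9/4:ℝ) * (17/10)^n < ((471:ℝ)/200)^n := by
      have : ((471:ℝ)/200)^n = ((471:ℝ)/340)^n * (17/10)^n := by
        rw [← mul_pow]; norm_num
      rw [this]
      have h5 : (9/4:ℝ) < ((471:ℝ)/340)^n := lt_of_lt_of_le h3' h2
      nlinarith
    have : (17/10:ℝ)^n < (4/9) * (3*π/4)^n := by
      nlinarith
    linarith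
end
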